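/- General soundness of simplification rule S3: let d be a vertex of a graph G, let D be a proper nonempty subset of the neighbours of d, and let C be the set of vertices outside D ∪ {d} adjacent to some vertex of D. Suppose there is at least one edge with both endpoints in C ∪ D, and every edge with an endpoint in C ∪ D has one endpoint in D and the other in C ∪ D ∪ {d}. Then for any edge e with both endpoints in C ∪ D, there is a maximum induced matching of G that avoids d as an endpoint; moreover the maximum induced matching size of G equals the maximum, over induced matchings M consisting of edges with both endpoints in C ∪ D, of |M| plus the maximum induced matching size of G with {d} ∪ C ∪ D removed. -/

import Mathlib

/-!
Write `T = C ∪ D`. Every neighbour of a vertex of `T` lies in `T ∪ {d}`, and every edge meeting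
`T` has an endpoint in `D ⊆ N(d)`. So if a maximum induced matching uses an edge at `d`, its other
edges are non-adjacent to `d`, hence avoid `T ∪ {d}` and are separated from `T`; trading the edge
at `d` for an edge inside `T` keeps the size. A maximum induced matching avoiding `d` splits into
its edges inside `T` and its edges inside `G − (T ∪ {d})`; conversely, since no edge joins `T` to
the rest of `G − d`, any induced matching inside `T` combines with any induced matching of
`G − (T ∪ {d})`.
-/

open SimpleGraph

/-- A set `M` of edges of `G` is an induced matching: all elements are edges of `G`,
and any two distinct edges of `M` neither share an endpoint nor have adjacent endpoints;
equivalently every vertex of the subgraph induced by the endpoints of `M` has degree 1. -/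
def IsInducedMatching {V : Type*} (G : SimpleGraph V) (M : Set (Sym2 V)) : Prop :=
  M ⊆ G.edgeSet ∧
    ∀ e ∈ M, ∀ f ∈ M, e ≠ f → ∀ u ∈ e, ∀ v ∈ f, u ≠ v ∧ ¬ G.Adj u v

/-- The maximum cardinality of an induced matching of `G`. -/
noncomputable def maxIM {V : Type*} (G : SimpleGraph V) : ℕ :=
  sSup {k | ∃ M : Finset (Sym2 V), IsInducedMatching G (↑M) ∧ M.card = k}

section InducedMatching

variable {V W : Type*} {G : SimpleGraph V}

namespace IsInducedMatching

lemma empty : IsInducedMatching G ∅ := ⟨Set.empty_subset _, by simp⟩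

lemma singleton {a b : V} (hab : G.Adj a b) : IsInducedMatching G {s(a, b)} :=
  ⟨by simpa using hab, by simp⟩

lemma mono {M N : Set (Sym2 V)} (hN : IsInducedMatching G N) (hMN : M ⊆ N) :
    IsInducedMatching G M :=
  ⟨hMN.trans hN.1, fun e he f hf => hN.2 e (hMN he) f (hMN hf)⟩

lemma union {M N : Set (Sym2 V)} (hM : IsInducedMatching G M) (hN : IsInducedMatching G N)
    (hMN : ∀ e ∈ M, ∀ f ∈ N, ∀ u ∈ e, ∀ v ∈ f, u ≠ v ∧ ¬ G.Adj u v) :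
    IsInducedMatching G (M ∪ N) := by
  refine ⟨Set.union_subset hM.1 hN.1, ?_⟩
  rintro e (he | he) f (hf | hf) hef u hu v hv
  · exact hM.2 e he f hf hef u hu v hv
  · exact hMN e he f hf u hu v hv
  · obtain ⟨huv, hadj⟩ := hMN f hf e he v hv u hu
    exact ⟨huv.symm, fun h => hadj h.symm⟩
  · exact hN.2 e he f hf hef u hu v hv

lemma image {G' : SimpleGraph W} {M : Set (Sym2 W)} (f : G' ↪g G)
    (hM : IsInducedMatching G' M) : IsInducedMatching G (Sym2.map f '' M) := by
  refine ⟨?_, ?_⟩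
  · rintro _ ⟨e, he, rfl⟩
    induction e using Sym2.ind with
    | _ a b => simpa using hM.1 he
  · rintro _ ⟨e, he, rfl⟩ _ ⟨e', he', rfl⟩ hne _ hfu _ hfv
    obtain ⟨u, hu, rfl⟩ := Sym2.mem_map.mp hfu
    obtain ⟨v, hv, rfl⟩ := Sym2.mem_map.mp hfv
    obtain ⟨huv, hadj⟩ := hM.2 e he e' he' (fun h => hne (h ▸ rfl)) u hu v hv
    exact ⟨f.injective.ne huv, by simpa using hadj⟩

lemma preimage {G' : SimpleGraph W} {M : Set (Sym2 V)} (f : G' ↪g G)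
    (hM : IsInducedMatching G M) : IsInducedMatching G' (Sym2.map f ⁻¹' M) := by
  refine ⟨?_, ?_⟩
  · intro e he
    induction e using Sym2.ind with
    | _ a b => simpa using hM.1 he
  · intro e he e' he' hne u hu v hv
    obtain ⟨huv, hadj⟩ := hM.2 _ he _ he' ((Sym2.map.injective f.injective).ne hne)
      (f u) (Sym2.mem_map.mpr ⟨u, hu, rfl⟩) (f v) (Sym2.mem_map.mpr ⟨v, hv, rfl⟩)
    exact ⟨fun h => huv (h ▸ rfl), fun h => hadj (f.map_adj_iff.mpr h)⟩

end IsInducedMatching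

section Finite


variable [Finite V]

lemma bddAbove_card_isInducedMatching (G : SimpleGraph V) :
    BddAbove {k | ∃ M : Finset (Sym2 V), IsInducedMatching G ↑M ∧ M.card = k} := by
  have := Fintype.ofFinite V
  classical
  exact ⟨Fintype.card (Sym2 V), by rintro k ⟨M, -, rfl⟩; exact M.card_le_univ⟩

lemma card_le_maxIM {M : Finset (Sym2 V)} (hM : IsInducedMatching G ↑M) : M.card ≤ maxIM G :=
  le_csSup (bddAbove_card_isInducedMatching G) ⟨M, hM, rfl⟩

lemma exists_isInducedMatching_card_eq_maxIM (G : SimpleGraph V) :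
    ∃ M : Finset (Sym2 V), IsInducedMatching G ↑M ∧ M.card = maxIM G :=
  Nat.sSup_mem (s := {k | ∃ M : Finset (Sym2 V), IsInducedMatching G ↑M ∧ M.card = k})
    ⟨0, ∅, by simpa using IsInducedMatching.empty, rfl⟩ (bddAbove_card_isInducedMatching G)

lemma exists_isInducedMatching_card_eq_maxIM_induce (G : SimpleGraph V) (S : Set V) :
    ∃ M : Finset (Sym2 V), IsInducedMatching G ↑M ∧ (∀ e ∈ M, ∀ x ∈ e, x ∈ S) ∧
      M.card = maxIM (G.induce S) := by
  classical
  obtain ⟨M, hM, hcard⟩ := exists_isInducedMatching_card_eq_maxIM (G.induce S)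
  refine ⟨M.image (Sym2.map (↑)), by
    rw [Finset.coe_image]; exact hM.image (Embedding.induce S), ?_, ?_⟩
  · intro e he x hx
    obtain ⟨e, -, rfl⟩ := Finset.mem_image.mp he
    obtain ⟨x, -, rfl⟩ := Sym2.mem_map.mp hx
    exact x.2
  · rw [Finset.card_image_of_injective _ (Sym2.map.injective Subtype.val_injective), hcard]

lemma card_le_maxIM_induce {S : Set V} {M : Finset (Sym2 V)} (hM : IsInducedMatching G ↑M)
    (hMS : ∀ e ∈ M, ∀ x ∈ e, x ∈ S) : M.card ≤ maxIM (G.induce S) := by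
  classical
  have hinj : Function.Injective (Sym2.map ((↑) : S → V)) :=
    Sym2.map.injective Subtype.val_injective
  have hrange : ∀ e ∈ M, e ∈ Set.range (Sym2.map ((↑) : S → V)) := by
    intro e he
    induction e using Sym2.ind with
    | _ a b => exact ⟨s(⟨a, hMS _ he a (by simp)⟩, ⟨b, hMS _ he b (by simp)⟩), rfl⟩
  calc M.card = (M.preimage _ hinj.injOn).card := by
        rw [Finset.card_preimage, Finset.filter_true_of_mem hrange]
    _ ≤ maxIM (G.induce S) := card_le_maxIM <| by
      rw [Finset.coe_preimage]; exact hM.preimage (Embedding.induce S)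

lemma exists_subset_card_le_add_maxIM_induce {M : Finset (Sym2 V)}
    (hM : IsInducedMatching G ↑M) (S : Set V) :
    ∃ M₁ ⊆ M, (∀ e ∈ M₁, ∃ x ∈ e, x ∉ S) ∧ M.card ≤ M₁.card + maxIM (G.induce S) := by
  classical
  refine ⟨M.filter fun e => ∃ x ∈ e, x ∉ S, M.filter_subset _,
    fun e he => (Finset.mem_filter.mp he).2, ?_⟩
  have hinside : (M.filter fun e => ¬ ∃ x ∈ e, x ∉ S).card ≤ maxIM (G.induce S) :=
    card_le_maxIM_induce (hM.mono (Finset.coe_subset.mpr (M.filter_subset _)))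
      fun e he x hx => by_contra fun h => (Finset.mem_filter.mp he).2 ⟨x, hx, h⟩
  rw [← Finset.card_filter_add_card_filter_not (s := M) fun e => ∃ x ∈ e, x ∉ S]
  omega

lemma card_add_maxIM_induce_le {S T : Set V} (hTS : ∀ u ∈ T, ∀ v ∈ S, u ≠ v ∧ ¬ G.Adj u v)
    {M : Finset (Sym2 V)} (hM : IsInducedMatching G ↑M) (hMT : ∀ e ∈ M, ∀ x ∈ e, x ∈ T) :
    M.card + maxIM (G.induce S) ≤ maxIM G := by
  classical
  obtain ⟨N, hN, hNS, hcard⟩ := exists_isInducedMatching_card_eq_maxIM_induce G S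
  have hsep : ∀ e ∈ M, ∀ f ∈ N, ∀ u ∈ e, ∀ v ∈ f, u ≠ v ∧ ¬ G.Adj u v :=
    fun e he f hf u hu v hv => hTS u (hMT e he u hu) v (hNS f hf v hv)
  have hdisj : Disjoint M N := Finset.disjoint_left.mpr fun e he heN =>
    (hsep e he e heN _ e.out_fst_mem _ e.out_fst_mem).1 rfl
  calc M.card + maxIM (G.induce S) = (M ∪ N).card := by
        rw [Finset.card_union_of_disjoint hdisj, hcard]
    _ ≤ maxIM G := card_le_maxIM <| by rw [Finset.coe_union]; exact hM.union hN hsep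

section Separator

variable {T : Set V} {d : V}

lemma card_add_maxIM_induce_compl_insert_le
    (hclosed : ∀ u ∈ T, ∀ v, G.Adj u v → v ∈ insert d T) {M : Finset (Sym2 V)}
    (hM : IsInducedMatching G ↑M) (hMT : ∀ e ∈ M, ∀ x ∈ e, x ∈ T) :
    M.card + maxIM (G.induce (insert d T)ᶜ) ≤ maxIM G :=
  card_add_maxIM_induce_le (S := (insert d T)ᶜ) (fun u hu v hv => ⟨fun h => hv (h ▸ Or.inr hu),
    fun h => hv (hclosed u hu v h)⟩) hM hMT

lemma exists_subset_card_le_add_maxIM_induce_compl_insert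
    (hclosed : ∀ u ∈ T, ∀ v, G.Adj u v → v ∈ insert d T) {M : Finset (Sym2 V)}
    (hM : IsInducedMatching G ↑M) (hdM : ∀ e ∈ M, d ∉ e) :
    ∃ M₁ ⊆ M, (∀ e ∈ M₁, ∀ x ∈ e, x ∈ T) ∧
      M.card ≤ M₁.card + maxIM (G.induce (insert d T)ᶜ) := by
  obtain ⟨M₁, hM₁M, hmeet, hle⟩ := exists_subset_card_le_add_maxIM_induce hM (insert d T)ᶜ
  refine ⟨M₁, hM₁M, fun e he => ?_, hle⟩
  have hde := hdM e (hM₁M he)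
  obtain ⟨x, hxe, hx⟩ := hmeet e he
  obtain ⟨y, rfl⟩ := Sym2.mem_iff_exists.mp hxe
  have hxT : x ∈ T := (not_not.mp hx).resolve_left fun h => hde (h ▸ hxe)
  have hyT : y ∈ T := (hclosed x hxT y (hM.1 (hM₁M he))).resolve_left
    fun h => hde (h ▸ Sym2.mem_mk_right x y)
  intro z hz
  rcases Sym2.mem_iff.mp hz with rfl | rfl <;> assumption

lemma exists_isInducedMatching_card_eq_maxIM_forall_not_mem
    (hclosed : ∀ u ∈ T, ∀ v, G.Adj u v → v ∈ insert d T) (hdT : d ∉ T)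
    (hdom : ∀ u v, G.Adj u v → u ∈ T → G.Adj d u ∨ G.Adj d v)
    (hedge : ∃ a b, G.Adj a b ∧ a ∈ T ∧ b ∈ T) :
    ∃ M : Finset (Sym2 V), IsInducedMatching G ↑M ∧ M.card = maxIM G ∧ ∀ e ∈ M, d ∉ e := by
  classical
  obtain ⟨M, hM, hcard⟩ := exists_isInducedMatching_card_eq_maxIM G
  by_cases hd : ∀ e ∈ M, d ∉ e
  · exact ⟨M, hM, hcard, hd⟩
  obtain ⟨e, he, hde⟩ : ∃ e ∈ M, d ∈ e := by simpa using hd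
  obtain ⟨a, b, hab, ha, hb⟩ := hedge
  have hfar : ∀ f ∈ M.erase e, ∀ x ∈ f, x ∉ insert d T := by
    intro f hf x hx hxT
    have hsep := hM.2 e he f (Finset.mem_of_mem_erase hf) (Finset.ne_of_mem_erase hf).symm d hde
    rcases hxT with rfl | hxT
    · exact (hsep x hx).1 rfl
    obtain ⟨y, rfl⟩ := Sym2.mem_iff_exists.mp hx
    rcases hdom x y (hM.1 (Finset.mem_of_mem_erase hf)) hxT with h | h
    · exact (hsep x hx).2 h
    · exact (hsep y (Sym2.mem_mk_right x y)).2 h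
  have hsep : ∀ e' ∈ ({s(a, b)} : Set (Sym2 V)), ∀ f ∈ (M.erase e : Set (Sym2 V)),
      ∀ u ∈ e', ∀ v ∈ f, u ≠ v ∧ ¬ G.Adj u v := by
    rintro _ rfl f hf u hu v hv
    have huT : u ∈ T := by rcases Sym2.mem_iff.mp hu with rfl | rfl <;> assumption
    exact ⟨fun h => hfar f hf v hv (h ▸ Set.mem_insert_of_mem d huT),
      fun h => hfar f hf v hv (hclosed u huT v h)⟩
  have hab_notMem : s(a, b) ∉ M.erase e := fun h =>
    (hsep _ rfl _ h a (Sym2.mem_mk_left a b) a (Sym2.mem_mk_left a b)).1 rfl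
  refine ⟨insert s(a, b) (M.erase e), ?_, ?_, ?_⟩
  · rw [Finset.coe_insert, Set.insert_eq]
    exact (IsInducedMatching.singleton hab).union (hM.mono (by simp)) hsep
  · rw [Finset.card_insert_of_notMem hab_notMem, Finset.card_erase_add_one he, hcard]
  · intro f hf hdf
    rcases Finset.mem_insert.mp hf with rfl | hf
    · rcases Sym2.mem_iff.mp hdf with rfl | rfl <;> contradiction
    · exact hfar f hf d hdf (Set.mem_insert d T)

end Separator

end Finite

end InducedMatching

theorem stmt_11_general {V : Type*} [Fintype V] (G : SimpleGraph V) (d : V) (D C : Set V)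
    (hD : D ⊆ G.neighborSet d)
    (hC : C = {v : V | v ∉ D ∧ v ≠ d ∧ ∃ u ∈ D, G.Adj u v})
    (hedge : ∃ u v : V, G.Adj u v ∧ u ∈ C ∪ D ∧ v ∈ C ∪ D)
    (hlocal : ∀ u v : V, G.Adj u v → u ∈ C ∪ D →
      ((u ∈ D ∧ v ∈ C ∪ D ∪ {d}) ∨ (v ∈ D ∧ u ∈ C ∪ D ∪ {d}))) :
    (∃ M : Finset (Sym2 V), IsInducedMatching G (↑M) ∧ M.card = maxIM G ∧
      ∀ e ∈ M, d ∉ e) ∧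
    maxIM G = sSup {k : ℕ | ∃ M : Finset (Sym2 V), IsInducedMatching G (↑M) ∧
      (∀ e ∈ M, ∀ x ∈ e, x ∈ C ∪ D) ∧
      k = M.card + maxIM (G.induce (insert d (C ∪ D))ᶜ)} := by
  have hdT : d ∉ C ∪ D := by
    rintro (hdC | hdD)
    · exact (hC ▸ hdC).2.1 rfl
    · exact G.irrefl (hD hdD)
  have hclosed : ∀ u ∈ C ∪ D, ∀ v, G.Adj u v → v ∈ insert d (C ∪ D) := by
    intro u hu v huv
    rcases hlocal u v huv hu with ⟨-, hv⟩ | ⟨hv, -⟩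
    · rwa [Set.union_singleton] at hv
    · exact Or.inr (Or.inr hv)
  have hdom : ∀ u v, G.Adj u v → u ∈ C ∪ D → G.Adj d u ∨ G.Adj d v := fun u v huv hu =>
    (hlocal u v huv hu).imp (fun h => hD h.1) (fun h => hD h.1)
  obtain ⟨M, hM, hcard, hdM⟩ :=
    exists_isInducedMatching_card_eq_maxIM_forall_not_mem hclosed hdT hdom hedge
  obtain ⟨M₁, hM₁M, hM₁T, hle⟩ := exists_subset_card_le_add_maxIM_induce_compl_insert hclosed hM hdM
  have hM₁ : IsInducedMatching G ↑M₁ := hM.mono (Finset.coe_subset.mpr hM₁M)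
  refine ⟨⟨M, hM, hcard, hdM⟩, ((?_ : IsGreatest _ (maxIM G)).csSup_eq).symm⟩
  refine ⟨⟨M₁, hM₁, hM₁T, ?_⟩, ?_⟩
  · exact le_antisymm (hcard ▸ hle) (card_add_maxIM_induce_compl_insert_le hclosed hM₁ hM₁T)
  · rintro _ ⟨N, hN, hNT, rfl⟩
    exact card_add_maxIM_induce_compl_insert_le hclosed hN hNT

/-- general soundness of simplification rule S3: let `D` be a proper
nonempty subset of the neighbours of `d` and let `C` be the vertices outside `D ∪ {d}`
adjacent to some vertex of `D`. If there is an edge with both endpoints in `C ∪ D`, and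
every edge with an endpoint in `C ∪ D` has one endpoint in `D` and the other in
`C ∪ D ∪ {d}`, then some maximum induced matching of `G` avoids `d` as an endpoint, and
`maxIM G` is the maximum over induced matchings `M` consisting of edges with both
endpoints in `C ∪ D` of `|M| + maxIM (G − ({d} ∪ C ∪ D))`. -/
theorem stmt_11 {V : Type*} [Fintype V] (G : SimpleGraph V) (d : V) (D C : Set V)
    (hD : D ⊆ G.neighborSet d) (hDne : D.Nonempty) (hDprop : D ≠ G.neighborSet d)
    (hC : C = {v : V | v ∉ D ∧ v ≠ d ∧ ∃ u ∈ D, G.Adj u v})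
    (hedge : ∃ u v : V, G.Adj u v ∧ u ∈ C ∪ D ∧ v ∈ C ∪ D)
    (hlocal : ∀ u v : V, G.Adj u v → u ∈ C ∪ D →
      ((u ∈ D ∧ v ∈ C ∪ D ∪ {d}) ∨ (v ∈ D ∧ u ∈ C ∪ D ∪ {d}))) :
    (∃ M : Finset (Sym2 V), IsInducedMatching G (↑M) ∧ M.card = maxIM G ∧
      ∀ e ∈ M, d ∉ e) ∧
    maxIM G = sSup {k : ℕ | ∃ M : Finset (Sym2 V), IsInducedMatching G (↑M) ∧
      (∀ e ∈ M, ∀ x ∈ e, x ∈ C ∪ D) ∧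
      k = M.card + maxIM (G.induce (insert d (C ∪ D))ᶜ)} :=
  stmt_11_general G d D C hD hC hedge hlocal
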